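/- For arrovian voting systems C, C' on at least three alternatives with associated coalition-structure maps Δ, Δ' (where ΔN = N ∪ (minimal decisive set relative to N)), one has C(P) ⊆ C'(P) for all profiles P if and only if ΔN ⊇ Δ'N for all N ⊆ I. -/

import Mathlib

variable {A I : Type*}

/-- A partial preorder: a reflexive and transitive binary relation. -/
def IsPPO (P : A → A → Prop) : Prop := Reflexive P ∧ Transitive P

/-- A linear (total) preorder: reflexive, transitive and complete. -/
def IsLPO (P : A → A → Prop) : Prop := Reflexive P ∧ Transitive P ∧ ∀ a b, P a b ∨ P b a

/-- A profile of partial preorders. -/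
def IsPPOProfile (P : I → A → A → Prop) : Prop := ∀ i, IsPPO (P i)

/-- A profile of linear (total) preorders. -/
def IsLPOProfile (P : I → A → A → Prop) : Prop := ∀ i, IsLPO (P i)

/-- Strict preference. -/
def StrictPref (P : A → A → Prop) (a b : A) : Prop := P a b ∧ ¬ P b a

/-- Indifference. -/
def Indiff (P : A → A → Prop) (a b : A) : Prop := P a b ∧ P b a

/-- The set `A` contains at least three distinct alternatives. -/
def ThreeAlts (A : Type*) : Prop := ∃ a b c : A, a ≠ b ∧ b ≠ c ∧ a ≠ c

/-- Unanimity. -/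
def Unanimity (C : (I → A → A → Prop) → A → A → Prop) : Prop :=
  ∀ P, IsPPOProfile P → ∀ a b : A, (∀ i, P i a b) → C P a b

/-- Independence of irrelevant alternatives. -/
def IIA (C : (I → A → A → Prop) → A → A → Prop) : Prop :=
  ∀ P P' : I → A → A → Prop, IsPPOProfile P → IsPPOProfile P' → ∀ a b : A,
    {i | P i a b} = {i | P' i a b} → {i | P i b a} = {i | P' i b a} →
    (C P a b ↔ C P' a b)

/-- Neutrality: `C (ρ*P) = ρ*(C P)` for every permutation `ρ` of the alternatives. -/
def Neutrality (C : (I → A → A → Prop) → A → A → Prop) : Prop :=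
  ∀ (ρ : Equiv.Perm A) (P : I → A → A → Prop), IsPPOProfile P →
    ∀ x y : A, C (fun i a b => P i (ρ.symm a) (ρ.symm b)) x y ↔ C P (ρ.symm x) (ρ.symm y)

/-- Monotonicity. -/
def Monotonicity (C : (I → A → A → Prop) → A → A → Prop) : Prop :=
  ∀ P P' : I → A → A → Prop, IsPPOProfile P → IsPPOProfile P' → ∀ a b : A,
    {i | P i a b} ⊆ {i | P' i a b} → {i | P' i b a} ⊆ {i | P i b a} →
    C P a b → C P' a b

/-- `J` is a decisive set: unanimous strict preference on `J` forces weak aggregate preference. -/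
def Decisive (C : (I → A → A → Prop) → A → A → Prop) (J : Set I) : Prop :=
  ∀ P, IsPPOProfile P → ∀ a b : A, (∀ j ∈ J, StrictPref (P j) a b) → C P a b

/-- `J` is a strongly decisive set: unanimous weak preference on `J` forces weak aggregate preference. -/
def SDecisive (C : (I → A → A → Prop) → A → A → Prop) (J : Set I) : Prop :=
  ∀ P, IsPPOProfile P → ∀ a b : A, (∀ j ∈ J, P j a b) → C P a b

/-- `J` is decisive relative to `N`: if all members of `N` are indifferent and all members
of `J` strictly prefer `a` to `b`, then `a ≽ b` in the aggregate. -/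
def RelDecisive (C : (I → A → A → Prop) → A → A → Prop) (N J : Set I) : Prop :=
  ∀ P, IsPPOProfile P → ∀ a b : A,
    (∀ i ∈ N, Indiff (P i) a b) → (∀ j ∈ J, StrictPref (P j) a b) → C P a b

/-- `δ` assigns to each `N ⊆ I` the minimal set `δ N ⊆ I \ N` decisive relative to `N`. -/
def MinRelDecisive (C : (I → A → A → Prop) → A → A → Prop) (δ : Set I → Set I) : Prop :=
  ∀ N : Set I, δ N ⊆ Nᶜ ∧ RelDecisive C N (δ N) ∧
    ∀ J : Set I, J ⊆ Nᶜ → RelDecisive C N J → δ N ⊆ J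

namespace ArrowInc

inductive ACl : Type | d | n | m | k
deriving DecidableEq

instance : Fintype ACl :=
  ⟨⟨↑[ACl.d, ACl.n, ACl.m, ACl.k], Multiset.coe_nodup.mpr (by decide)⟩,
    fun x => by cases x <;> decide⟩

open ACl

open Classical in
noncomputable def triVal (x y z : A) (vx vy vz : ℕ × ℕ) (u : A) : ℕ × ℕ :=
  if u = x then vx else if u = y then vy else vz

def triRel (x y z : A) (vx vy vz : ℕ × ℕ) (u v : A) : Prop :=
  u = v ∨ ((u = x ∨ u = y ∨ u = z) ∧ (v = x ∨ v = y ∨ v = z) ∧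
    triVal x y z vx vy vz v ≤ triVal x y z vx vy vz u)

lemma triRel_ppo (x y z : A) (vx vy vz : ℕ × ℕ) : IsPPO (triRel x y z vx vy vz) := by
  constructor
  · intro u; exact Or.inl rfl
  · rintro u v w (rfl | ⟨hu, hv, h1⟩) h2
    · exact h2
    · rcases h2 with rfl | ⟨_, hw, h2⟩
      · exact Or.inr ⟨hu, hv, h1⟩
      · exact Or.inr ⟨hu, hw, h1.trans' h2⟩

section evals
variable {x y z : A} (hxy : x ≠ y) (hxz : x ≠ z) (hyz : y ≠ z) (vx vy vz : ℕ × ℕ)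

lemma triVal_x : triVal x y z vx vy vz x = vx := by simp [triVal]
lemma triVal_y (hxy : x ≠ y) : triVal x y z vx vy vz y = vy := by
  simp [triVal, hxy.symm]
lemma triVal_z (hxz : x ≠ z) (hyz : y ≠ z) : triVal x y z vx vy vz z = vz := by
  simp [triVal, hxz.symm, hyz.symm]

lemma triRel_uv {u v : A} (huv : u ≠ v)
    (hu : u = x ∨ u = y ∨ u = z) (hv : v = x ∨ v = y ∨ v = z) :
    triRel x y z vx vy vz u v ↔
      triVal x y z vx vy vz v ≤ triVal x y z vx vy vz u := by
  constructor
  · rintro (rfl | ⟨_, _, h⟩)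
    · exact absurd rfl huv
    · exact h
  · intro h; exact Or.inr ⟨hu, hv, h⟩


lemma tr_xy (hxy : x ≠ y) : triRel x y z vx vy vz x y ↔ vy ≤ vx := by
  rw [triRel_uv vx vy vz hxy (Or.inl rfl) (Or.inr (Or.inl rfl)), triVal_x, triVal_y vx vy vz hxy]
lemma tr_yx (hxy : x ≠ y) : triRel x y z vx vy vz y x ↔ vx ≤ vy := by
  rw [triRel_uv vx vy vz hxy.symm (Or.inr (Or.inl rfl)) (Or.inl rfl), triVal_x, triVal_y vx vy vz hxy]
lemma tr_xz (hxz : x ≠ z) (hyz : y ≠ z) : triRel x y z vx vy vz x z ↔ vz ≤ vx := by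
  rw [triRel_uv vx vy vz hxz (Or.inl rfl) (Or.inr (Or.inr rfl)), triVal_x, triVal_z vx vy vz hxz hyz]
lemma tr_zx (hxz : x ≠ z) (hyz : y ≠ z) : triRel x y z vx vy vz z x ↔ vx ≤ vz := by
  rw [triRel_uv vx vy vz hxz.symm (Or.inr (Or.inr rfl)) (Or.inl rfl), triVal_x, triVal_z vx vy vz hxz hyz]
lemma tr_yz (hxy : x ≠ y) (hxz : x ≠ z) (hyz : y ≠ z) : triRel x y z vx vy vz y z ↔ vz ≤ vy := by
  rw [triRel_uv vx vy vz hyz (Or.inr (Or.inl rfl)) (Or.inr (Or.inr rfl)), triVal_y vx vy vz hxy, triVal_z vx vy vz hxz hyz]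
lemma tr_zy (hxy : x ≠ y) (hxz : x ≠ z) (hyz : y ≠ z) : triRel x y z vx vy vz z y ↔ vy ≤ vz := by
  rw [triRel_uv vx vy vz hyz.symm (Or.inr (Or.inr rfl)) (Or.inr (Or.inl rfl)), triVal_y vx vy vz hxy, triVal_z vx vy vz hxz hyz]

end evals


/-- allowed per-voter transitions for one-step constructions -/
def Rstep : ACl → ACl → Bool
  | d, d => true
  | n, n => true
  | m, _ => true
  | k, k => true
  | k, d => true
  | _, _ => false

/-- allowed per-voter transitions for the full monotonicity lemma -/
def R2 : ACl → ACl → Bool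
  | d, d => true
  | n, n => true
  | m, _ => true
  | k, _ => true
  | _, _ => false

def Realizes (P : I → A → A → Prop) (x y : A) (c : I → ACl) : Prop :=
  ∀ i, (P i x y ↔ (c i = d ∨ c i = n)) ∧ (P i y x ↔ (c i = n ∨ c i = m))

def WinC (C : (I → A → A → Prop) → A → A → Prop) (x y : A) (c : I → ACl) : Prop :=
  ∀ P, IsPPOProfile P → Realizes P x y c → C P x y

open Classical in
noncomputable def clsOf (P : I → A → A → Prop) (x y : A) (i : I) : ACl :=
  if P i x y then (if P i y x then n else d) else (if P i y x then m else k)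

lemma realizes_clsOf (P : I → A → A → Prop) (x y : A) : Realizes P x y (clsOf P x y) := by
  intro i
  unfold clsOf
  by_cases h1 : P i x y <;> by_cases h2 : P i y x <;> simp [h1, h2]


/-- values for step1: known config at (x,y), unanimous y ≥ z, derive (x,z). -/
def s1V : ACl → ACl → ((ℕ × ℕ) × (ℕ × ℕ) × (ℕ × ℕ))
  | d, _ => ((2,2),(1,1),(1,1))
  | n, _ => ((1,1),(1,1),(1,1))
  | m, d => ((1,1),(2,2),(0,0))
  | m, n => ((1,1),(2,2),(1,1))
  | m, m => ((0,0),(1,1),(1,1))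
  | m, k => ((1,0),(2,2),(0,1))
  | k, d => ((2,0),(1,2),(1,0))
  | k, _ => ((0,2),(2,0),(1,0))

lemma s1_checks : ∀ s t : ACl, Rstep s t = true →
    (((s1V s t).2.1 ≤ (s1V s t).1 ↔ (s = d ∨ s = n)) ∧
     ((s1V s t).1 ≤ (s1V s t).2.1 ↔ (s = n ∨ s = m))) ∧
    (((s1V s t).2.2 ≤ (s1V s t).1 ↔ (t = d ∨ t = n)) ∧
     ((s1V s t).1 ≤ (s1V s t).2.2 ↔ (t = n ∨ t = m))) ∧
    ((s1V s t).2.2 ≤ (s1V s t).2.1) := by decide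

/-- values for step2: known config at (z,y), unanimous x ≥ z, derive (x,y). -/
def s2V : ACl → ACl → ((ℕ × ℕ) × (ℕ × ℕ) × (ℕ × ℕ))
  | d, _ => ((1,1),(0,0),(1,1))
  | n, _ => ((1,1),(1,1),(1,1))
  | m, d => ((2,2),(1,1),(0,0))
  | m, n => ((1,1),(1,1),(0,0))
  | m, m => ((1,1),(2,2),(1,1))
  | m, k => ((2,0),(1,1),(0,0))
  | k, d => ((2,2),(0,1),(1,0))
  | k, _ => ((2,0),(0,1),(1,0))

lemma s2_checks : ∀ s t : ACl, Rstep s t = true →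
    (((s2V s t).2.1 ≤ (s2V s t).2.2 ↔ (s = d ∨ s = n)) ∧
     ((s2V s t).2.2 ≤ (s2V s t).2.1 ↔ (s = n ∨ s = m))) ∧
    (((s2V s t).2.1 ≤ (s2V s t).1 ↔ (t = d ∨ t = n)) ∧
     ((s2V s t).1 ≤ (s2V s t).2.1 ↔ (t = n ∨ t = m))) ∧
    ((s2V s t).2.2 ≤ (s2V s t).1) := by decide

/-- double construction: side classes at (x,z) and (z,y), plus values. -/
def dC1 : ACl → ACl → ACl
  | d, _ => d
  | n, _ => n
  | m, k => m
  | m, _ => n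
  | k, d => d
  | k, k => d
  | k, _ => k

def dC2 : ACl → ACl → ACl
  | d, _ => d
  | n, _ => n
  | m, d => d
  | m, n => n
  | m, m => m
  | m, k => k
  | k, _ => k

def dV : ACl → ACl → ((ℕ × ℕ) × (ℕ × ℕ) × (ℕ × ℕ))
  | d, _ => ((2,2),(0,0),(1,1))
  | n, _ => ((1,1),(1,1),(1,1))
  | m, d => ((1,1),(0,0),(1,1))
  | m, n => ((1,1),(1,1),(1,1))
  | m, m => ((1,1),(2,2),(1,1))
  | m, k => ((1,1),(0,3),(2,2))
  | k, d => ((2,2),(0,1),(1,0))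
  | k, n => ((1,1),(1,1),(0,3))
  | k, m => ((1,1),(2,2),(0,3))
  | k, k => ((2,0),(0,1),(1,0))

lemma d_checks : ∀ s t : ACl, R2 s t = true →
    (Rstep s (dC1 s t) = true) ∧ (Rstep s (dC2 s t) = true) ∧
    -- class at (x,z) is dC1 s t
    (((dV s t).2.2 ≤ (dV s t).1 ↔ (dC1 s t = d ∨ dC1 s t = n)) ∧
     ((dV s t).1 ≤ (dV s t).2.2 ↔ (dC1 s t = n ∨ dC1 s t = m))) ∧
    -- class at (z,y) is dC2 s t
    (((dV s t).2.1 ≤ (dV s t).2.2 ↔ (dC2 s t = d ∨ dC2 s t = n)) ∧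
     ((dV s t).2.2 ≤ (dV s t).2.1 ↔ (dC2 s t = n ∨ dC2 s t = m))) ∧
    -- class at (x,y) is t
    (((dV s t).2.1 ≤ (dV s t).1 ↔ (t = d ∨ t = n)) ∧
     ((dV s t).1 ≤ (dV s t).2.1 ↔ (t = n ∨ t = m))) := by decide

lemma Rstep_refl : ∀ s : ACl, Rstep s s = true := by decide


section main
variable {C : (I → A → A → Prop) → A → A → Prop}

lemma iia_transfer (hIIA : IIA C) {x y : A} {c : I → ACl} {P Q : I → A → A → Prop}
    (hP : IsPPOProfile P) (hQ : IsPPOProfile Q)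
    (h1 : Realizes P x y c) (h2 : Realizes Q x y c) : C P x y ↔ C Q x y := by
  apply hIIA P Q hP hQ x y
  · ext i
    have a1 := (h1 i).1; have a2 := (h2 i).1
    simp only [Set.mem_setOf_eq]; rw [a1, a2]
  · ext i
    have a1 := (h1 i).2; have a2 := (h2 i).2
    simp only [Set.mem_setOf_eq]; rw [a1, a2]

lemma winC_of_C (hIIA : IIA C) {P : I → A → A → Prop} (hP : IsPPOProfile P) {x y : A}
    (h : C P x y) : WinC C x y (clsOf P x y) := by
  intro P' hP' hreal
  exact (iia_transfer hIIA hP' hP hreal (realizes_clsOf P x y)).mpr h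

/-- Step 1: transfer a winning configuration from pair (x,y) to pair (x,z),
allowing per-voter transitions in `Rstep`. -/
lemma step1 (hC : ∀ P, IsPPOProfile P → IsPPO (C P)) (hU : Unanimity C) (hIIA : IIA C)
    {x y z : A} (hxy : x ≠ y) (hxz : x ≠ z) (hyz : y ≠ z)
    {c c' : I → ACl} (hs : ∀ i, Rstep (c i) (c' i) = true)
    (h : WinC C x y c) : WinC C x z c' := by
  intro P hP hreal
  set Q : I → A → A → Prop := fun i =>
    triRel x y z (s1V (c i) (c' i)).1 (s1V (c i) (c' i)).2.1 (s1V (c i) (c' i)).2.2 with hQdef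
  have hQ : IsPPOProfile Q := fun i => triRel_ppo _ _ _ _ _ _
  have hRxy : Realizes Q x y c := by
    intro i
    have hch := (s1_checks (c i) (c' i) (hs i)).1
    exact ⟨(tr_xy _ _ _ hxy).trans hch.1, (tr_yx _ _ _ hxy).trans hch.2⟩
  have hRxz : Realizes Q x z c' := by
    intro i
    have hch := (s1_checks (c i) (c' i) (hs i)).2.1
    exact ⟨(tr_xz _ _ _ hxz hyz).trans hch.1, (tr_zx _ _ _ hxz hyz).trans hch.2⟩
  have hyzQ : ∀ i, Q i y z := fun i =>
    (tr_yz _ _ _ hxy hxz hyz).mpr (s1_checks (c i) (c' i) (hs i)).2.2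
  have h1 : C Q x y := h Q hQ hRxy
  have h2 : C Q y z := hU Q hQ y z hyzQ
  have h3 : C Q x z := (hC Q hQ).2 h1 h2
  exact (iia_transfer hIIA hP hQ hreal hRxz).mpr h3

/-- Step 2: transfer a winning configuration from pair (z,y) to pair (x,y). -/
lemma step2 (hC : ∀ P, IsPPOProfile P → IsPPO (C P)) (hU : Unanimity C) (hIIA : IIA C)
    {x y z : A} (hxy : x ≠ y) (hxz : x ≠ z) (hyz : y ≠ z)
    {c c' : I → ACl} (hs : ∀ i, Rstep (c i) (c' i) = true)
    (h : WinC C z y c) : WinC C x y c' := by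
  intro P hP hreal
  set Q : I → A → A → Prop := fun i =>
    triRel x y z (s2V (c i) (c' i)).1 (s2V (c i) (c' i)).2.1 (s2V (c i) (c' i)).2.2 with hQdef
  have hQ : IsPPOProfile Q := fun i => triRel_ppo _ _ _ _ _ _
  have hRzy : Realizes Q z y c := by
    intro i
    have hch := (s2_checks (c i) (c' i) (hs i)).1
    exact ⟨(tr_zy _ _ _ hxy hxz hyz).trans hch.1, (tr_yz _ _ _ hxy hxz hyz).trans hch.2⟩
  have hRxy : Realizes Q x y c' := by
    intro i
    have hch := (s2_checks (c i) (c' i) (hs i)).2.1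
    exact ⟨(tr_xy _ _ _ hxy).trans hch.1, (tr_yx _ _ _ hxy).trans hch.2⟩
  have hxzQ : ∀ i, Q i x z := fun i =>
    (tr_xz _ _ _ hxz hyz).mpr (s2_checks (c i) (c' i) (hs i)).2.2
  have h1 : C Q x z := hU Q hQ x z hxzQ
  have h2 : C Q z y := h Q hQ hRzy
  have h3 : C Q x y := (hC Q hQ).2 h1 h2
  exact (iia_transfer hIIA hP hQ hreal hRxy).mpr h3


lemma third (hA : ThreeAlts A) (p q : A) : ∃ w : A, w ≠ p ∧ w ≠ q := by
  obtain ⟨a, b, c, hab, hbc, hac⟩ := hA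
  by_cases hap : a = p
  · subst hap
    by_cases hbq : b = q
    · subst hbq
      exact ⟨c, fun h => hac h.symm, fun h => hbc h.symm⟩
    · exact ⟨b, fun h => hab h.symm, hbq⟩
  · by_cases haq : a = q
    · subst haq
      by_cases hbp : b = p
      · subst hbp
        exact ⟨c, fun h => hbc h.symm, fun h => hac h.symm⟩
      · exact ⟨b, hbp, fun h => hab h.symm⟩
    · exact ⟨a, hap, haq⟩

/-- Pair neutrality: a winning configuration wins at every pair. -/
lemma neut (hC : ∀ P, IsPPOProfile P → IsPPO (C P)) (hU : Unanimity C) (hIIA : IIA C)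
    (hA : ThreeAlts A) {x y x' y' : A} (hxy : x ≠ y) (hxy' : x' ≠ y')
    {c : I → ACl} (h : WinC C x y c) : WinC C x' y' c := by
  have hid : ∀ i, Rstep (c i) (c i) = true := fun i => Rstep_refl (c i)
  by_cases hx : x' = x
  · subst hx
    by_cases hy : y' = y
    · subst hy; exact h
    · exact step1 hC hU hIIA hxy hxy' (fun hh => hy hh.symm) hid h
  · by_cases hy : y' = y
    · subst hy
      exact step2 hC hU hIIA hxy' hx hxy.symm hid h
    · by_cases hyx : y' = x
      · by_cases hxy2 : x' = y
        · rw [hyx, hxy2]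
          obtain ⟨w, hw1, hw2⟩ := third hA x y
          have h1 : WinC C x w c :=
            step1 hC hU hIIA hxy (Ne.symm hw1) (Ne.symm hw2) hid h
          have h2 : WinC C y w c :=
            step2 hC hU hIIA (Ne.symm hw2) hxy.symm hw1 hid h1
          exact step1 hC hU hIIA (Ne.symm hw2) hxy.symm hw1 hid h2
        · rw [hyx]
          have h2 : WinC C x' y c := step2 hC hU hIIA hxy2 hx hxy.symm hid h
          exact step1 hC hU hIIA hxy2 hx hxy.symm hid h2
      · have h1 : WinC C x y' c :=
          step1 hC hU hIIA hxy (Ne.symm hyx) (fun hh => hy hh.symm) hid h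
        exact step2 hC hU hIIA hxy' hx hyx hid h1

/-- Full monotonicity: a winning configuration can be weakened along `R2`
and transferred to any pair. -/
lemma winC_mono (hC : ∀ P, IsPPOProfile P → IsPPO (C P)) (hU : Unanimity C) (hIIA : IIA C)
    (hA : ThreeAlts A) {a b : A} (hab : a ≠ b) {c : I → ACl}
    (h : WinC C a b c) {x y : A} (hxy : x ≠ y) {t : I → ACl}
    (ht : ∀ i, R2 (c i) (t i) = true) : WinC C x y t := by
  have hG : ∀ (u v : A), u ≠ v → ∀ c' : I → ACl,
      (∀ i, Rstep (c i) (c' i) = true) → WinC C u v c' := by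
    intro u v huv c' hc'
    obtain ⟨z, hz1, hz2⟩ := third hA a b
    have h1 : WinC C a z c' := step1 hC hU hIIA hab (fun hh => hz1 hh.symm)
      (fun hh => hz2 hh.symm) hc' h
    exact neut hC hU hIIA hA (fun hh => hz1 hh.symm) huv h1
  intro P hP hreal
  obtain ⟨z, hz1, hz2⟩ := third hA x y
  have hxz : x ≠ z := fun hh => hz1 hh.symm
  have hyz : y ≠ z := fun hh => hz2 hh.symm
  set Q : I → A → A → Prop := fun i =>
    triRel x y z (dV (c i) (t i)).1 (dV (c i) (t i)).2.1 (dV (c i) (t i)).2.2 with hQdef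
  have hQ : IsPPOProfile Q := fun i => triRel_ppo _ _ _ _ _ _
  have hRxz : Realizes Q x z (fun i => dC1 (c i) (t i)) := fun i =>
    ⟨(tr_xz _ _ _ hxz hyz).trans ((d_checks (c i) (t i) (ht i)).2.2.1).1,
     (tr_zx _ _ _ hxz hyz).trans ((d_checks (c i) (t i) (ht i)).2.2.1).2⟩
  have hRzy : Realizes Q z y (fun i => dC2 (c i) (t i)) := fun i =>
    ⟨(tr_zy _ _ _ hxy hxz hyz).trans ((d_checks (c i) (t i) (ht i)).2.2.2.1).1,
     (tr_yz _ _ _ hxy hxz hyz).trans ((d_checks (c i) (t i) (ht i)).2.2.2.1).2⟩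
  have hRxy : Realizes Q x y t := fun i =>
    ⟨(tr_xy _ _ _ hxy).trans ((d_checks (c i) (t i) (ht i)).2.2.2.2).1,
     (tr_yx _ _ _ hxy).trans ((d_checks (c i) (t i) (ht i)).2.2.2.2).2⟩
  have h1 : C Q x z := hG x z hxz _ (fun i => (d_checks (c i) (t i) (ht i)).1) Q hQ hRxz
  have h2 : C Q z y := hG z y (Ne.symm hyz) _
    (fun i => (d_checks (c i) (t i) (ht i)).2.1) Q hQ hRzy
  have h3 : C Q x y := (hC Q hQ).2 h1 h2
  exact (iia_transfer hIIA hP hQ hreal hRxy).mpr h3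

lemma R2_of : ∀ s t : ACl, (s = d → t = d) → (s = n → t = n) → R2 s t = true := by decide

lemma clsOf_eq_d {P : I → A → A → Prop} {x y : A} {i : I} :
    clsOf P x y i = d ↔ StrictPref (P i) x y := by
  unfold clsOf StrictPref
  by_cases h1 : P i x y <;> by_cases h2 : P i y x <;> simp [h1, h2]

lemma clsOf_eq_n {P : I → A → A → Prop} {x y : A} {i : I} :
    clsOf P x y i = n ↔ Indiff (P i) x y := by
  unfold clsOf Indiff
  by_cases h1 : P i x y <;> by_cases h2 : P i y x <;> simp [h1, h2]

/-- The structure lemma: if `C P a b` then the minimal set decisive relative to the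
indifferent voters consists of strict supporters of `a` over `b`. -/
lemma delta_subset (hC : ∀ P, IsPPOProfile P → IsPPO (C P)) (hU : Unanimity C) (hIIA : IIA C)
    (hA : ThreeAlts A) {δ : Set I → Set I} (hδ : MinRelDecisive C δ)
    {P : I → A → A → Prop} (hP : IsPPOProfile P) {a b : A} (h : C P a b) :
    δ {i | Indiff (P i) a b} ⊆ {i | StrictPref (P i) a b} := by
  set N : Set I := {i | Indiff (P i) a b} with hN
  by_cases hab : a = b
  · subst hab
    intro j hj
    exact absurd ⟨(hP j).1 a, (hP j).1 a⟩ ((hδ N).1 hj)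
  · have hW : WinC C a b (clsOf P a b) := winC_of_C hIIA hP h
    have hRD : RelDecisive C N {i | StrictPref (P i) a b} := by
      intro Q hQ x y hNQ hDQ
      by_cases hxy : x = y
      · subst hxy; exact (hC Q hQ).1 x
      · refine winC_mono hC hU hIIA hA hab hW hxy ?_ Q hQ (realizes_clsOf Q x y)
        intro i
        apply R2_of
        · intro hd
          exact clsOf_eq_d.mpr (hDQ i (clsOf_eq_d.mp hd))
        · intro hn
          have hi : Indiff (Q i) x y := hNQ i (clsOf_eq_n.mp hn)
          exact clsOf_eq_n.mpr hi
    exact (hδ N).2.2 _ (fun i hi hin => hi.2 hin.2) hRD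

end main

end ArrowInc

theorem inclusion_iff_coalition [Fintype I] (C : (I → A → A → Prop) → A → A → Prop)
    (hA : ThreeAlts A)
    (hC : ∀ P, IsPPOProfile P → IsPPO (C P))
    (hU : Unanimity C) (hIIA : IIA C)
    (C' : (I → A → A → Prop) → A → A → Prop)
    (hC' : ∀ P, IsPPOProfile P → IsPPO (C' P))
    (hU' : Unanimity C') (hIIA' : IIA C')
    (δ δ' : Set I → Set I)
    (hδ : MinRelDecisive C δ) (hδ' : MinRelDecisive C' δ') :
    (∀ P : I → A → A → Prop, IsPPOProfile P → ∀ a b : A, C P a b → C' P a b) ↔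
      ∀ N : Set I, δ' N ∪ N ⊆ δ N ∪ N := by
  constructor
  · intro h N
    have hRD' : RelDecisive C' N (δ N) := fun P hP a b h1 h2 =>
      h P hP a b ((hδ N).2.1 P hP a b h1 h2)
    have hss : δ' N ⊆ δ N := (hδ' N).2.2 (δ N) (hδ N).1 hRD'
    exact Set.union_subset_union_left N hss
  · intro hΔ P hP a b hCP
    by_cases hab : a = b
    · subst hab; exact (hC' P hP).1 a
    · set N : Set I := {i | Indiff (P i) a b} with hNdef
      have hsub : δ N ⊆ {i | StrictPref (P i) a b} :=
        ArrowInc.delta_subset hC hU hIIA hA hδ hP hCP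
      have h1 : δ' N ⊆ {i | StrictPref (P i) a b} := by
        intro j hj
        rcases hΔ N (Or.inl hj) with hj2 | hj2
        · exact hsub hj2
        · exact absurd hj2 ((hδ' N).1 hj)
      exact (hδ' N).2.1 P hP a b (fun i hi => hi) (fun j hj => h1 hj)
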